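/- arXiv:1309.6291 — 2 statements merged into one kernel-verified Lean document; each statement's English description precedes it below -/
import Mathlib

section
/- (Discrete Gronwall-type lemma) Let γ > 0 and let (a_n), (b_n) be sequences of nonnegative reals satisfying (1+γ)² a_n² ≤ a_{n−1}² + b_n a_n for all n ≥ 1. Then for every k ≥ 1, Σ_{n=1}^{k} a_n ≤ (1/γ)(a_0 + Σ_{n=1}^{k} b_n). -/
/-- Key step: from `(1+γ)² x² ≤ y² + b x` deduce `γ x ≤ y - x + b`. -/
lemma step_aux (γ x y c : ℝ) (hγ : 0 < γ) (hx : 0 ≤ x) (hy : 0 ≤ y) (hc : 0 ≤ c)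
    (h : (1 + γ)^2 * x^2 ≤ y^2 + c * x) : γ * x ≤ y - x + c := by
  by_contra hcon
  push_neg at hcon
  -- hcon : y - x + c < γ * x, i.e. y + c < (1+γ) x
  have h1 : y + c < (1 + γ) * x := by nlinarith
  have hxpos : 0 < x := by nlinarith
  have h2 : c < (1 + γ) * x - y := by linarith
  have h3 : (1 + γ)^2 * x^2 ≤ y^2 + ((1 + γ) * x - y) * x := by nlinarith
  -- i.e. γ(1+γ) x² ≤ y(y - x)
  have h4 : γ * (1 + γ) * x^2 ≤ y * (y - x) := by nlinarith
  have hylt : y < (1 + γ) * x := by nlinarith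
  rcases le_or_gt y x with hle | hlt
  · nlinarith [mul_nonpos_of_nonneg_of_nonpos hy (show y - x ≤ 0 by linarith),
      mul_pos (mul_pos hγ (show (0:ℝ) < 1 + γ by linarith)) (pow_pos hxpos 2)]
  · nlinarith [mul_lt_mul'' hylt (show y - x < (1 + γ) * x - x by linarith)
      (le_of_lt (lt_of_le_of_lt hx hlt)) (by linarith : (0:ℝ) ≤ y - x)]

/-- Discrete Gronwall-type lemma: if `(1+γ)² aₙ² ≤ aₙ₋₁² + bₙ aₙ` for `n ≥ 1`,
then `Σ_{n=1}^k aₙ ≤ γ⁻¹ (a₀ + Σ_{n=1}^k bₙ)`. -/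
theorem stmt6 (γ : ℝ) (hγ : 0 < γ) (a b : ℕ → ℝ)
    (ha : ∀ n, 0 ≤ a n) (hb : ∀ n, 0 ≤ b n)
    (hrec : ∀ n, 1 ≤ n → (1 + γ)^2 * (a n)^2 ≤ (a (n - 1))^2 + b n * a n)
    (k : ℕ) (hk : 1 ≤ k) :
    ∑ n ∈ Finset.Icc 1 k, a n ≤ (1 / γ) * (a 0 + ∑ n ∈ Finset.Icc 1 k, b n) := by
  have key : ∀ m : ℕ, γ * ∑ n ∈ Finset.Icc 1 m, a n ≤
      a 0 - a m + ∑ n ∈ Finset.Icc 1 m, b n := by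
    intro m
    induction m with
    | zero => simp
    | succ m ih =>
      rw [Finset.sum_Icc_succ_top (by omega : 1 ≤ m + 1),
        Finset.sum_Icc_succ_top (by omega : 1 ≤ m + 1)]
      have hstep : γ * a (m + 1) ≤ a m - a (m + 1) + b (m + 1) := by
        have := hrec (m + 1) (by omega)
        simp only [Nat.add_sub_cancel] at this
        exact step_aux γ (a (m+1)) (a m) (b (m+1)) hγ (ha _) (ha _) (hb _) this
      have : γ * (∑ n ∈ Finset.Icc 1 m, a n + a (m + 1)) =
          γ * ∑ n ∈ Finset.Icc 1 m, a n + γ * a (m + 1) := by ring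
      rw [this]
      linarith
  have h := key k
  have hak : 0 ≤ a k := ha k
  rw [div_mul_eq_mul_div, le_div_iff₀ hγ, one_mul]
  nlinarith [h]
end

section
/- (Joint lower semicontinuity lemma) Let I ⊂ ℝ be measurable and let h_n, h, m_n, m : I → [0,+∞] be measurable functions such that liminf_n h_n(x) ≥ h(x) for a.e. x ∈ I and m_n ⇀ m weakly in L¹(I). Then liminf_n ∫_I h_n m_n dx ≥ ∫_I h m dx. -/
/-!
Truncate the tail infima of `hₙ` at height `n`: `Fₙ = min (⨅ j ≥ n, h j) n` increases to
`liminf hₙ`, and each `Fₙ` is a bounded test function lying below `h k` for `k ≥ n`. Hence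
`∫ Fₙ m = lim_k ∫ Fₙ m_k ≤ liminf_k ∫ h_k m_k` by weak convergence, and monotone convergence
in `n` gives `∫ h m ≤ ∫ (liminf hₙ) m = sup_n ∫ Fₙ m ≤ liminf ∫ hₙ mₙ`.
-/

open MeasureTheory Filter
open scoped ENNReal NNReal Topology

section

variable {α : Type*}

/-- Capped at `n` so that its `toReal` is a bounded test function for the weak convergence;
as `n → ∞` it still increases to `liminf h`. -/
noncomputable def truncTailInf (h : ℕ → α → ℝ≥0∞) (n : ℕ) (x : α) : ℝ≥0∞ := (⨅ j ≥ n, h j x) ⊓ n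

theorem truncTailInf_le {h : ℕ → α → ℝ≥0∞} {n k : ℕ} (hnk : n ≤ k) (x : α) :
    truncTailInf h n x ≤ h k x :=
  inf_le_left.trans (iInf₂_le k hnk)

theorem truncTailInf_le_natCast (h : ℕ → α → ℝ≥0∞) (n : ℕ) (x : α) :
    truncTailInf h n x ≤ n :=
  inf_le_right

theorem monotone_truncTailInf (h : ℕ → α → ℝ≥0∞) (x : α) :
    Monotone fun n => truncTailInf h n x := fun _ _ hab =>
  inf_le_inf (biInf_mono fun _ hj => hab.trans hj) (Nat.cast_le.2 hab)

theorem iSup_truncTailInf (h : ℕ → α → ℝ≥0∞) (x : α) :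
    ⨆ n, truncTailInf h n x = atTop.liminf fun n => h n x := by
  rw [show (⨆ n, truncTailInf h n x) = ⨆ n : ℕ, (⨅ j ≥ n, h j x) ⊓ (n : ℝ≥0∞) from rfl,
    iSup_inf_of_monotone (fun _ _ hab => biInf_mono fun _ hj => hab.trans hj)
    (fun _ _ hab => Nat.cast_le.2 hab), ENNReal.iSup_natCast, inf_top_eq,
    liminf_eq_iSup_iInf_of_nat]

end

section

variable {α : Type*} [MeasurableSpace α] {μ : Measure α}

theorem measurable_truncTailInf {h : ℕ → α → ℝ≥0∞} (hh : ∀ n, Measurable (h n)) (n : ℕ) :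
    Measurable (truncTailInf h n) :=
  (Measurable.iInf fun j => Measurable.iInf fun _ => hh j).inf measurable_const

theorem ofReal_integral_le_lintegral_ofReal (f : α → ℝ) :
    ENNReal.ofReal (∫ x, f x ∂μ) ≤ ∫⁻ x, ENNReal.ofReal (f x) ∂μ := by
  by_cases hf : Integrable f μ
  · rw [integral_eq_lintegral_pos_part_sub_lintegral_neg_part hf]
    exact (ENNReal.ofReal_le_ofReal (sub_le_self _ ENNReal.toReal_nonneg)).trans
      ENNReal.ofReal_toReal_le
  · simp [integral_undef hf]

theorem ofReal_integral_mul_toReal_le_lintegral (g : α → ℝ) (φ : α → ℝ≥0∞) :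
    ENNReal.ofReal (∫ x, g x * (φ x).toReal ∂μ) ≤ ∫⁻ x, φ x * ENNReal.ofReal (g x) ∂μ := by
  refine (ofReal_integral_le_lintegral_ofReal _).trans (lintegral_mono fun x => ?_)
  rw [ENNReal.ofReal_mul' ENNReal.toReal_nonneg, mul_comm]
  exact mul_le_mul_left ENNReal.ofReal_toReal_le _

theorem lintegral_mul_ofReal_eq_ofReal_integral {g : α → ℝ} {φ : α → ℝ≥0∞} {C : ℝ≥0}
    (hg : Integrable g μ) (hg0 : 0 ≤ᵐ[μ] g) (hφ : AEMeasurable φ μ) (hφC : ∀ x, φ x ≤ C) :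
    ∫⁻ x, φ x * ENNReal.ofReal (g x) ∂μ = ENNReal.ofReal (∫ x, g x * (φ x).toReal ∂μ) := by
  have hint : Integrable (fun x => g x * (φ x).toReal) μ :=
    hg.mul_bdd (c := C) hφ.ennreal_toReal.aestronglyMeasurable <| .of_forall fun x => by
      simpa using ENNReal.toReal_le_coe_of_le_coe (hφC x)
  rw [ofReal_integral_eq_lintegral_ofReal hint
    (hg0.mono fun x hx => mul_nonneg hx ENNReal.toReal_nonneg)]
  refine lintegral_congr fun x => ?_
  rw [ENNReal.ofReal_mul' ENNReal.toReal_nonneg, mul_comm,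
    ENNReal.ofReal_toReal (ne_top_of_le_ne_top ENNReal.coe_ne_top (hφC x))]

theorem lintegral_mul_le_liminf_of_tendsto_integral {h : ℕ → α → ℝ≥0∞} {m : ℕ → α → ℝ}
    {mlim : α → ℝ} {φ : α → ℝ≥0∞} {C : ℝ≥0} (hmlim : Integrable mlim μ)
    (hmlim0 : 0 ≤ᵐ[μ] mlim) (hφ : AEMeasurable φ μ) (hφC : ∀ x, φ x ≤ C)
    (hφh : ∀ᶠ k in atTop, ∀ x, φ x ≤ h k x)
    (hm : Tendsto (fun k => ∫ x, m k x * (φ x).toReal ∂μ) atTop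
      (𝓝 (∫ x, mlim x * (φ x).toReal ∂μ))) :
    ∫⁻ x, φ x * ENNReal.ofReal (mlim x) ∂μ ≤
      atTop.liminf fun k => ∫⁻ x, h k x * ENNReal.ofReal (m k x) ∂μ := by
  rw [lintegral_mul_ofReal_eq_ofReal_integral hmlim hmlim0 hφ hφC,
    ← ((ENNReal.continuous_ofReal.tendsto _).comp hm).liminf_eq]
  refine liminf_le_liminf (hφh.mono fun k hk => ?_)
  exact (ofReal_integral_mul_toReal_le_lintegral _ _).trans
    (lintegral_mono fun x => mul_le_mul_left (hk x) _)

theorem lintegral_mul_le_liminf_of_weak_tendsto {h : ℕ → α → ℝ≥0∞} {hlim : α → ℝ≥0∞}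
    {m : ℕ → α → ℝ} {mlim : α → ℝ} (hh : ∀ n, Measurable (h n)) (hmlim : Integrable mlim μ)
    (hmlim0 : 0 ≤ᵐ[μ] mlim) (hliminf : ∀ᵐ x ∂μ, hlim x ≤ atTop.liminf fun n => h n x)
    (hweak : ∀ φ : α → ℝ, Measurable φ → (∃ C, ∀ x, |φ x| ≤ C) →
      Tendsto (fun n => ∫ x, m n x * φ x ∂μ) atTop (𝓝 (∫ x, mlim x * φ x ∂μ))) :
    ∫⁻ x, hlim x * ENNReal.ofReal (mlim x) ∂μ ≤
      atTop.liminf fun n => ∫⁻ x, h n x * ENNReal.ofReal (m n x) ∂μ := by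
  have hF := measurable_truncTailInf hh
  calc ∫⁻ x, hlim x * ENNReal.ofReal (mlim x) ∂μ
      ≤ ∫⁻ x, (atTop.liminf fun n => h n x) * ENNReal.ofReal (mlim x) ∂μ :=
        lintegral_mono_ae (hliminf.mono fun x hx => mul_le_mul_left hx _)
    _ = ⨆ n, ∫⁻ x, truncTailInf h n x * ENNReal.ofReal (mlim x) ∂μ := by
        simp_rw [← iSup_truncTailInf, ENNReal.iSup_mul]
        exact lintegral_iSup' (fun n => (hF n).aemeasurable.mul hmlim.1.aemeasurable.ennreal_ofReal)
          (.of_forall fun x _ _ hab => mul_le_mul_left (monotone_truncTailInf h x hab) _)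
    _ ≤ _ := iSup_le fun n =>
        lintegral_mul_le_liminf_of_tendsto_integral hmlim hmlim0 (hF n).aemeasurable
          (C := n) (fun x => by simpa using truncTailInf_le_natCast h n x)
          (eventually_ge_atTop n |>.mono fun _ hk => truncTailInf_le hk)
          (hweak _ (hF n).ennreal_toReal ⟨n, fun x => by
            simpa using ENNReal.toReal_le_of_le_ofReal n.cast_nonneg
              (by simpa using truncTailInf_le_natCast h n x)⟩)

end

theorem stmt8_general (I : Set ℝ)
    (h : ℕ → ℝ → ℝ≥0∞) (hlim : ℝ → ℝ≥0∞)
    (m : ℕ → ℝ → ℝ) (mlim : ℝ → ℝ)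
    (hmeas : ∀ n, Measurable (h n))
    (hm'_nonneg : ∀ x, 0 ≤ mlim x)
    (hm'_int : IntegrableOn mlim I)
    (hliminf : ∀ᵐ x ∂(volume.restrict I),
      hlim x ≤ Filter.atTop.liminf fun n => h n x)
    (hweak : ∀ φ : ℝ → ℝ, Measurable φ → (∃ C, ∀ x, |φ x| ≤ C) →
      Tendsto (fun n => ∫ x in I, m n x * φ x) atTop
        (𝓝 (∫ x in I, mlim x * φ x))) :
    ∫⁻ x in I, hlim x * ENNReal.ofReal (mlim x) ≤
      Filter.atTop.liminf fun n => ∫⁻ x in I, h n x * ENNReal.ofReal (m n x) :=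
  lintegral_mul_le_liminf_of_weak_tendsto hmeas hm'_int (.of_forall hm'_nonneg) hliminf hweak

/-- Joint lower semicontinuity: if `liminf hₙ ≥ h` a.e. on `I` and `mₙ ⇀ m`
weakly in `L¹(I)` (nonnegative), then `liminf ∫ hₙ mₙ ≥ ∫ h m`. -/
theorem stmt8 (I : Set ℝ) (hI : MeasurableSet I)
    (h : ℕ → ℝ → ℝ≥0∞) (hlim : ℝ → ℝ≥0∞)
    (m : ℕ → ℝ → ℝ) (mlim : ℝ → ℝ)
    (hmeas : ∀ n, Measurable (h n)) (hmeas' : Measurable hlim)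
    (hm_meas : ∀ n, Measurable (m n)) (hm_meas' : Measurable mlim)
    (hm_nonneg : ∀ n x, 0 ≤ m n x) (hm'_nonneg : ∀ x, 0 ≤ mlim x)
    (hm_int : ∀ n, IntegrableOn (m n) I) (hm'_int : IntegrableOn mlim I)
    (hliminf : ∀ᵐ x ∂(volume.restrict I),
      hlim x ≤ Filter.atTop.liminf fun n => h n x)
    (hweak : ∀ φ : ℝ → ℝ, Measurable φ → (∃ C, ∀ x, |φ x| ≤ C) →
      Tendsto (fun n => ∫ x in I, m n x * φ x) atTop
        (𝓝 (∫ x in I, mlim x * φ x))) :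
    ∫⁻ x in I, hlim x * ENNReal.ofReal (mlim x) ≤
      Filter.atTop.liminf fun n => ∫⁻ x in I, h n x * ENNReal.ofReal (m n x) :=
  stmt8_general I h hlim m mlim hmeas hm'_nonneg hm'_int hliminf hweak
end
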